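/- arXiv:1105.4456 — 6 statements merged into one kernel-verified Lean document; each statement's English description precedes it below -/
import Mathlib

section
/- The generating series Σ_{m,n,p≥0} r_{m,n,p} s^m t^n u^p of 3D rook path counts equals (1-s)(1-t)(1-u) / (1 - 2(s+t+u) + 3(st+tu+us) - 4stu) as a formal power series in ℚ[[s,t,u]]. -/
/-- A single 3D rook step: a positive integer multiple of a standard unit vector. -/
def IsRookStep (v : ℕ × ℕ × ℕ) : Prop :=
  ∃ m : ℕ, 0 < m ∧ (v = (m, 0, 0) ∨ v = (0, m, 0) ∨ v = (0, 0, m))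

/-- The number of 3D rook paths from the origin to `(i,j,k)`. -/
noncomputable def rookCount (i j k : ℕ) : ℕ :=
  Nat.card { l : List (ℕ × ℕ × ℕ) // (∀ s ∈ l, IsRookStep s) ∧ l.sum = (i, j, k) }

/-- The generating series `Σ r_{m,n,p} s^m t^n u^p` of 3D rook path counts. -/
noncomputable def rookSeries : MvPowerSeries (Fin 3) ℚ :=
  fun d => (rookCount (d 0) (d 1) (d 2) : ℚ)

/-!
A path is either empty or a first step followed by a path, so its generating series `F`
satisfies `F = 1 + S * F`, where `S` is the series of single steps. A rook step is a positive
multiple of one coordinate vector, so `S = Σ_i X_i / (1 - X_i)`, and multiplying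
`1 - S` by `(1 - X_0)(1 - X_1)(1 - X_2)` gives the denominator of the statement.
-/

open Finset

def LatticePaths {M : Type*} [AddMonoid M] (P : M → Prop) (d : M) : Type _ :=
  {l : List M // (∀ s ∈ l, P s) ∧ l.sum = d}

namespace LatticePaths

section AddMonoid

variable {M : Type*} [AddMonoid M]

def congrAddEquiv {N : Type*} [AddMonoid N] (φ : M ≃+ N) (P : N → Prop) (d : M) :
    LatticePaths (P ∘ φ) d ≃ LatticePaths P (φ d) :=
  (Equiv.listEquivOfEquiv φ.toEquiv).subtypeEquiv fun l => by
    simp [Equiv.listEquivOfEquiv, ← map_list_sum, φ.injective.eq_iff]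

def equivNilSumCons [HasAntidiagonal M] (P : M → Prop) (d : M) :
    LatticePaths P d ≃
      PLift (d = 0) ⊕ Σ p : antidiagonal d, PLift (P p.1.1) × LatticePaths P p.1.2 where
  toFun
    | ⟨[], _, h⟩ => .inl ⟨h.symm⟩
    | ⟨a :: t, hP, h⟩ =>
      .inr ⟨⟨(a, t.sum), mem_antidiagonal.2 h⟩, ⟨hP a List.mem_cons_self⟩,
        ⟨t, fun s hs => hP s (List.mem_cons_of_mem a hs), rfl⟩⟩
  invFun
    | .inl ⟨h⟩ => ⟨[], by simp, h.symm⟩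
    | .inr ⟨p, ⟨ha⟩, ⟨t, ht, hsum⟩⟩ =>
      ⟨p.1.1 :: t, by simpa [ha] using ht,
        by rw [List.sum_cons, hsum]; exact mem_antidiagonal.1 p.2⟩
  left_inv := by rintro ⟨_ | ⟨a, t⟩, hP, rfl⟩ <;> rfl
  right_inv := by
    rintro (⟨⟨rfl⟩⟩ | ⟨⟨⟨a, b⟩, hab⟩, ⟨ha⟩, ⟨t, ht, hsum : t.sum = b⟩⟩)
    · rfl
    · subst hsum
      rfl

end AddMonoid

section Ordered

variable {M : Type*} [AddCommMonoid M] [PartialOrder M] [IsOrderedCancelAddMonoid M]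
  [CanonicallyOrderedAdd M] [HasAntidiagonal M] [WellFoundedLT M] {P : M → Prop}

theorem finite (hP : ¬P 0) (d : M) : Finite (LatticePaths P d) := by
  induction d using WellFoundedLT.induction with
  | _ d ih =>
  have (p : antidiagonal d) : Finite (PLift (P p.1.1) × LatticePaths P p.1.2) := by
    by_cases h : P p.1.1
    · have hne : p.1.1 ≠ 0 := fun h0 => hP (h0 ▸ h)
      have := ih _ (mem_antidiagonal.1 p.2 ▸ lt_add_of_pos_left _ (pos_iff_ne_zero.2 hne))
      infer_instance
    · have : IsEmpty (PLift (P p.1.1)) := ⟨fun h' => h h'.down⟩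
      infer_instance
  exact Finite.of_equiv _ (equivNilSumCons P d).symm

theorem card_eq [DecidableEq M] [DecidablePred P] (hP : ¬P 0) (d : M) :
    Nat.card (LatticePaths P d) = (if d = 0 then 1 else 0) +
      ∑ p ∈ antidiagonal d, (if P p.1 then 1 else 0) * Nat.card (LatticePaths P p.2) := by
  have (b : M) : Finite (LatticePaths P b) := finite hP b
  rw [Nat.card_congr (equivNilSumCons P d), Nat.card_sum, Nat.card_sigma]
  congr 1
  · split_ifs with h <;> simp [h]
  · refine (Finset.sum_coe_sort _
      (fun p : M × M => Nat.card (PLift (P p.1) × LatticePaths P p.2))).trans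
      (Finset.sum_congr rfl fun p _ => ?_)
    rw [Nat.card_prod]
    split_ifs with h <;> simp [h]

end Ordered

end LatticePaths

section PowerSeries

open MvPowerSeries

variable {σ R : Type*}

open Classical in
noncomputable def stepSeries [Semiring R] (P : (σ →₀ ℕ) → Prop) : MvPowerSeries σ R :=
  fun a => if P a then 1 else 0

noncomputable def latticePathSeries [Semiring R] (P : (σ →₀ ℕ) → Prop) : MvPowerSeries σ R :=
  fun d => Nat.card (LatticePaths P d)

theorem coeff_stepSeries [Semiring R] (P : (σ →₀ ℕ) → Prop) [DecidablePred P] (a : σ →₀ ℕ) :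
    coeff a (stepSeries P : MvPowerSeries σ R) = if P a then 1 else 0 := by
  change @ite R (P a) (Classical.propDecidable _) 1 0 = _
  congr

theorem coeff_latticePathSeries [Semiring R] (P : (σ →₀ ℕ) → Prop) (d : σ →₀ ℕ) :
    coeff d (latticePathSeries P : MvPowerSeries σ R) = Nat.card (LatticePaths P d) :=
  rfl

theorem latticePathSeries_eq_one_add_stepSeries_mul [Semiring R] {P : (σ →₀ ℕ) → Prop}
    (hP : ¬P 0) :
    (latticePathSeries P : MvPowerSeries σ R) = 1 + stepSeries P * latticePathSeries P := by
  classical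
  ext d
  rw [map_add, coeff_one, coeff_mul, coeff_latticePathSeries, LatticePaths.card_eq hP]
  simp only [coeff_stepSeries, coeff_latticePathSeries]
  push_cast
  rfl

theorem stepSeries_exists_eq_sum [Semiring R] {ι : Type*} [Fintype ι]
    {Q : ι → (σ →₀ ℕ) → Prop} (hQ : ∀ d i j, Q i d → Q j d → i = j) :
    (stepSeries (fun d => ∃ i, Q i d) : MvPowerSeries σ R) = ∑ i, stepSeries (Q i) := by
  classical
  ext d
  simp only [map_sum, coeff_stepSeries]
  split_ifs with h
  · obtain ⟨i, hi⟩ := h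
    rw [Finset.sum_eq_single i (fun j _ hj => if_neg fun hj' => hj (hQ d j i hj' hi))
      (by simp), if_pos hi]
  · exact (Finset.sum_eq_zero fun i _ => if_neg fun hi => h ⟨i, hi⟩).symm

def IsAxisStep (i : σ) (d : σ →₀ ℕ) : Prop :=
  ∃ m, 0 < m ∧ Finsupp.single i m = d

theorem IsAxisStep.unique {i j : σ} {d : σ →₀ ℕ} (hi : IsAxisStep i d) (hj : IsAxisStep j d) :
    i = j := by
  obtain ⟨m, -, rfl⟩ := hi
  obtain ⟨n, hn, h⟩ := hj
  rcases Finsupp.single_eq_single_iff _ _ _ _ |>.1 h with ⟨hji, -⟩ | ⟨hn0, -⟩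
  · exact hji.symm
  · exact absurd hn0 hn.ne'

theorem not_isAxisStep_zero (i : σ) : ¬IsAxisStep i 0 := by
  rintro ⟨m, hm, h⟩
  exact hm.ne' (Finsupp.single_eq_zero.1 h)

theorem isAxisStep_single_add_iff {i : σ} {e : σ →₀ ℕ} :
    IsAxisStep i (Finsupp.single i 1 + e) ↔ e = 0 ∨ IsAxisStep i e := by
  constructor
  · rintro ⟨_ | m, hm, h⟩
    · omega
    · rw [add_comm m, Finsupp.single_add, add_right_inj] at h
      subst h
      rcases m with _ | m
      · simp
      · exact .inr ⟨m + 1, m.succ_pos, rfl⟩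
  · rintro (rfl | ⟨m, -, rfl⟩)
    · exact ⟨1, one_pos, by simp⟩
    · exact ⟨1 + m, by omega, Finsupp.single_add i 1 m⟩

theorem one_sub_X_mul_stepSeries_isAxisStep [CommRing R] (i : σ) :
    (1 - X i) * (stepSeries (IsAxisStep i) : MvPowerSeries σ R) = X i := by
  classical
  suffices h : (stepSeries (IsAxisStep i) : MvPowerSeries σ R) =
      X i * (1 + stepSeries (IsAxisStep i)) by
    linear_combination h
  ext d
  rw [X, coeff_monomial_mul, map_add, coeff_one, coeff_stepSeries, coeff_stepSeries, one_mul]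
  by_cases hd : Finsupp.single i 1 ≤ d
  · obtain ⟨e, rfl⟩ := exists_add_of_le hd
    rw [if_pos hd, add_tsub_cancel_left, isAxisStep_single_add_iff]
    by_cases he : e = 0
    · simp [he, not_isAxisStep_zero]
    · simp [he]
  · rw [if_neg hd, if_neg]
    rintro ⟨m, hm, rfl⟩
    exact hd (Finsupp.single_le_single.2 hm)

end PowerSeries

noncomputable def tripleEquiv : (Fin 3 →₀ ℕ) ≃+ ℕ × ℕ × ℕ where
  toFun d := (d 0, d 1, d 2)
  invFun v := Finsupp.single 0 v.1 + Finsupp.single 1 v.2.1 + Finsupp.single 2 v.2.2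
  left_inv d := by ext i; fin_cases i <;> simp
  right_inv v := by simp
  map_add' _ _ := rfl

theorem tripleEquiv_apply (d : Fin 3 →₀ ℕ) : tripleEquiv d = (d 0, d 1, d 2) :=
  rfl

theorem isRookStep_comp_tripleEquiv :
    IsRookStep ∘ tripleEquiv = fun d => ∃ i, IsAxisStep i d := by
  ext d
  constructor
  · rintro ⟨m, hm, h | h | h⟩ <;> [use 0; use 1; use 2] <;>
      exact ⟨m, hm, tripleEquiv.injective (by simp [h, tripleEquiv_apply])⟩
  · rintro ⟨i, m, hm, rfl⟩
    refine ⟨m, hm, ?_⟩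
    fin_cases i <;> simp [tripleEquiv_apply]

theorem rookSeries_eq_latticePathSeries :
    rookSeries = latticePathSeries fun d => ∃ i, IsAxisStep i d := by
  ext d
  rw [← isRookStep_comp_tripleEquiv]
  exact congrArg Nat.cast
    (Nat.card_congr (LatticePaths.congrAddEquiv tripleEquiv IsRookStep d)).symm

open MvPowerSeries in
theorem rook_generating_series :
    rookSeries =
      ((1 - X 0) * (1 - X 1) * (1 - X 2)) *
        (1 - 2 * (X 0 + X 1 + X 2)
           + 3 * (X 0 * X 1 + X 1 * X 2 + X 2 * X 0)
           - 4 * (X 0 * X 1 * X 2) : MvPowerSeries (Fin 3) ℚ)⁻¹ := by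
  have hF := latticePathSeries_eq_one_add_stepSeries_mul (R := ℚ)
    (P := fun d => ∃ i : Fin 3, IsAxisStep i d) fun ⟨i, hi⟩ => not_isAxisStep_zero i hi
  rw [stepSeries_exists_eq_sum (Q := IsAxisStep) fun _ _ _ => IsAxisStep.unique, Fin.sum_univ_three,
    ← rookSeries_eq_latticePathSeries] at hF
  have h₀ := one_sub_X_mul_stepSeries_isAxisStep (R := ℚ) (0 : Fin 3)
  have h₁ := one_sub_X_mul_stepSeries_isAxisStep (R := ℚ) (1 : Fin 3)
  have h₂ := one_sub_X_mul_stepSeries_isAxisStep (R := ℚ) (2 : Fin 3)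
  rw [MvPowerSeries.eq_mul_inv_iff_mul_eq (by simp)]
  linear_combination (1 - X 0) * (1 - X 1) * (1 - X 2) * hF + rookSeries *
    ((1 - X 1) * (1 - X 2) * h₀ + (1 - X 0) * (1 - X 2) * h₁ + (1 - X 0) * (1 - X 1) * h₂)
end

section
/- Suppose a sequence (a_n) of rationals satisfies the fourth-order recurrence 2n²(n-1)a_n − (n−1)(121n²−91n−6)a_{n−1} − (n−2)(475n²−2512n+2829)a_{n−2} + 18(n−3)(97n²−519n+702)a_{n−3} − 1152(n−3)(n−4)²a_{n−4} = 0 for all n ≥ 4, with a_0 = 1, a_1 = 6, a_2 = 222, a_3 = 9918. Then (a_n) also satisfies the third-order recurrence 2(n−1)(35n−52)n²a_n − (n−1)(4655n³−11781n²+8494n−1776)a_{n−1} + (n−2)(11305n³−41856n²+46487n−13128)a_{n−2} − 192(n−3)²(35n−17)(n−2)a_{n−3} = 0 for all n ≥ 3. -/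
theorem third_order_recurrence_from_fourth (a : ℕ → ℚ)
    (h0 : a 0 = 1) (h1 : a 1 = 6) (h2 : a 2 = 222) (h3 : a 3 = 9918)
    (hrec : ∀ n : ℕ, 4 ≤ n →
      2 * (n : ℚ)^2 * ((n : ℚ) - 1) * a n
        - ((n : ℚ) - 1) * (121 * (n : ℚ)^2 - 91 * (n : ℚ) - 6) * a (n - 1)
        - ((n : ℚ) - 2) * (475 * (n : ℚ)^2 - 2512 * (n : ℚ) + 2829) * a (n - 2)
        + 18 * ((n : ℚ) - 3) * (97 * (n : ℚ)^2 - 519 * (n : ℚ) + 702) * a (n - 3)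
        - 1152 * ((n : ℚ) - 3) * ((n : ℚ) - 4)^2 * a (n - 4) = 0) :
    ∀ n : ℕ, 3 ≤ n →
      2 * ((n : ℚ) - 1) * (35 * (n : ℚ) - 52) * (n : ℚ)^2 * a n
        - ((n : ℚ) - 1) * (4655 * (n : ℚ)^3 - 11781 * (n : ℚ)^2 + 8494 * (n : ℚ) - 1776) * a (n - 1)
        + ((n : ℚ) - 2) * (11305 * (n : ℚ)^3 - 41856 * (n : ℚ)^2 + 46487 * (n : ℚ) - 13128) * a (n - 2)
        - 192 * ((n : ℚ) - 3)^2 * (35 * (n : ℚ) - 17) * ((n : ℚ) - 2) * a (n - 3) = 0 := by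
  intro n hn
  induction n, hn using Nat.le_induction with
  | base => norm_num [h0, h1, h2, h3]
  | succ n hn ih =>
    have h4 := hrec (n + 1) (by omega)
    have e1 : n + 1 - 1 = n := by omega
    have e2 : n + 1 - 2 = n - 1 := by omega
    have e3 : n + 1 - 3 = n - 2 := by omega
    have e4 : n + 1 - 4 = n - 3 := by omega
    rw [e1, e2, e3, e4] at h4
    push_cast at h4 ⊢
    linear_combination (35 * ((n : ℚ) + 1) - 52) * h4 - 6 * ih
end

section
/- There exists a unique complex constant c such that the numerator of the rational function c·x(x−1)^{−2}(x−2/3)(x−1/64)^{−1} − 1 (written over the denominator (x−1)²(x−1/64)) is a perfect cube of a polynomial; namely c = −81/64, so that the function f(x) = −81x(x−2/3)/(64(x−1)²(x−1/64)) satisfies f(x) − 1 = P(x)/((x−1)²(x−1/64)), where the cubic numerator P(x) = (−81/64)·x(x−2/3) − (x−1)²(x−1/64) is the cube of a linear polynomial. -/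
open Polynomial

/-- The numerator of `c·x(x−2/3)/((x−1)²(x−1/64)) − 1`, written over the
denominator `(x−1)²(x−1/64)`, is a nonzero constant times the cube of a linear
polynomial exactly for the unique value `c = −81/64`. -/
theorem unique_constant_cube_numerator :
    ∀ c : ℂ,
      (∃ d : ℂ, d ≠ 0 ∧ ∃ h : Polynomial ℂ, h.degree = 1 ∧
          C c * (X * (X - C (2/3))) - (X - 1)^2 * (X - C (1/64)) = C d * h^3)
        ↔ c = -81/64 := by
  intro c
  constructor
  · rintro ⟨d, hd, h, hdeg, heq⟩
    set a := h.coeff 1 with ha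
    set b := h.coeff 0 with hb
    have hX : h = C a * X + C b := eq_X_add_C_of_degree_le_one hdeg.le
    have key : ∀ x : ℂ, c*x*(x-2/3) - (x-1)^2*(x-1/64) = d*(a*x+b)^3 := by
      intro x
      have := congrArg (eval x) heq
      rw [hX] at this
      simp only [eval_mul, eval_sub, eval_add, eval_pow, eval_C, eval_X, eval_one] at this
      linear_combination this
    have hpoly : (C (-1:ℂ)) * X^3 + C (c+129/64) * X^2 + C (-(2/3)*c - 33/32) * X + C (1/64)
        = C (d*a^3) * X^3 + C (3*d*a^2*b) * X^2 + C (3*d*a*b^2) * X + C (d*b^3) := by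
      apply Polynomial.funext
      intro x
      simp only [eval_add, eval_mul, eval_pow, eval_C, eval_X]
      linear_combination key x
    have h3 : (-1 : ℂ) = d*a^3 := by
      have := congrArg (fun p => Polynomial.coeff p 3) hpoly
      simp only [coeff_add, coeff_C_mul, coeff_X_pow, coeff_C, coeff_X] at this
      norm_num at this
      linear_combination this
    have h2 : c + 129/64 = 3*d*a^2*b := by
      have := congrArg (fun p => Polynomial.coeff p 2) hpoly
      simp only [coeff_add, coeff_C_mul, coeff_X_pow, coeff_C, coeff_X] at this
      norm_num at this
      linear_combination this
    have h1 : -(2/3)*c - 33/32 = 3*d*a*b^2 := by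
      have := congrArg (fun p => Polynomial.coeff p 1) hpoly
      simp only [coeff_add, coeff_C_mul, coeff_X_pow, coeff_C, coeff_X] at this
      norm_num at this
      linear_combination this
    have h0 : (1/64 : ℂ) = d*b^3 := by
      have := congrArg (fun p => Polynomial.coeff p 0) hpoly
      simp only [coeff_add, coeff_C_mul, coeff_X_pow, coeff_C, coeff_X] at this
      norm_num at this
      linear_combination this
    have eq1 : (c+129/64)^2 = 2*c + 99/32 := by
      linear_combination (-9*d*a*b^2) * h3 + (3*d*a^2*b + c + 129/64) * h2 + 3 * h1
    have eq2 : (c+129/64)*(-(2/3)*c - 33/32) = -9/64 := by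
      linear_combination (-9*d*b^3) * h3 + 9 * h0 + (3*d*a*b^2) * h2 + (c + 129/64) * h1
    linear_combination (-32/49) * eq1 + (-48/49) * eq2
  · rintro rfl
    refine ⟨-1, by norm_num, X - C (1/4), ?_, ?_⟩
    · compute_degree!
    · apply Polynomial.funext
      intro x
      simp only [eval_mul, eval_sub, eval_pow, eval_C, eval_X, eval_one]
      ring
end

section
/- The second-order differential operator P₂ = x(x−1)(64x−1)(3x−2)(6x+1)∂ₓ² + (4608x⁴−6372x³+813x²+514x−4)∂ₓ + 4(576x³−801x²−108x+74) annihilates the function H(x) = 6/((1−4x)(1−64x)) · ₂F₁(1/3, 2/3; 2; 27x(2−3x)/(1−4x)³) on a neighborhood of 0 (excluding the singularities). -/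
/-- The Gauss hypergeometric function `₂F₁(1/3, 2/3; 2; z)` as a sum of its series. -/
noncomputable def F13232 (z : ℝ) : ℝ :=
  ∑' n : ℕ,
    ((ascPochhammer ℝ n).eval (1/3) * (ascPochhammer ℝ n).eval (2/3)) /
      ((ascPochhammer ℝ n).eval 2 * (n.factorial : ℝ)) * z ^ n

/-- `H(x) = 6/((1−4x)(1−64x)) · ₂F₁(1/3, 2/3; 2; 27x(2−3x)/(1−4x)³)`. -/
noncomputable def H (x : ℝ) : ℝ :=
  6 / ((1 - 4*x) * (1 - 64*x)) * F13232 (27*x*(2 - 3*x) / (1 - 4*x)^3)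

/-!
`F13232` is Mathlib's `₂F₁ (1/3) (2/3) 2`, and `H = g · (F ∘ z)` with `g = prefactor`,
`z = arg`. For `|z| < 1` the power series `F = ∑ uₙ zⁿ` may be differentiated termwise, and the
recurrence `(n+1)(n+c) uₙ₊₁ = (n+a)(n+b) uₙ` of its coefficients turns into the hypergeometric
equation `z(1-z)F'' + (c-(a+b+1)z)F' - abF = 0`. By the product and chain rules, `P₂ H` is a
combination of `F, F', F''` at `z(x)` with rational coefficients, and this combination is
`-648(1-x)(1+6x)³/((1-4x)³(1-64x))` times the hypergeometric operator at `z(x)`, whatever the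
values of `F, F', F''`. Near `0` we have `|z(x)| < 1`, so `P₂ H = 0` there.
-/

open Filter Topology FormalMultilinearSeries

theorem HasSum.of_nat_add {G : Type*} [AddCommGroup G] [TopologicalSpace G]
    [IsTopologicalAddGroup G] {f : ℕ → G} {s : G} (k : ℕ) (h : HasSum (fun n => f (n + k)) s) (hf : ∀ i < k, f i = 0) :
    HasSum f s := by
  simpa [Finset.sum_eq_zero fun i hi => hf i (Finset.mem_range.mp hi)] using
    (hasSum_nat_add_iff k).mp h

theorem summable_add_one_pow_mul_geometric (k : ℕ) {r : ℝ} (hr : |r| < 1) :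
    Summable fun n : ℕ => ((n : ℝ) + 1) ^ k * r ^ n := by
  refine .of_norm_bounded_eventually_nat
    ((summable_pow_mul_geometric_of_norm_lt_one k (r := |r|) (by simpa using hr)).mul_left
      (2 ^ k))
    (eventually_atTop.mpr ⟨1, fun n hn => ?_⟩)
  have hn' : (1 : ℝ) ≤ n := by exact_mod_cast hn
  rw [Real.norm_eq_abs, abs_mul, abs_pow, abs_pow, ← mul_assoc, ← mul_pow]
  gcongr
  rw [abs_of_pos (by positivity)]
  linarith

section PowerSeries

variable {𝕜 : Type*} [RCLike 𝕜]

def derivCoeff (a : ℕ → 𝕜) (n : ℕ) : 𝕜 := (n + 1) * a (n + 1)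

variable {a : ℕ → 𝕜} {C : ℝ} {k : ℕ}

theorem norm_derivCoeff_le (ha : ∀ n, ‖a n‖ ≤ C * ((n : ℝ) + 1) ^ k) (n : ℕ) :
    ‖derivCoeff a n‖ ≤ C * 2 ^ k * ((n : ℝ) + 1) ^ (k + 1) := by
  have hC : 0 ≤ C := by simpa using (norm_nonneg _).trans (ha 0)
  have h := ha (n + 1)
  push_cast at h
  calc ‖derivCoeff a n‖ = ((n : ℝ) + 1) * ‖a (n + 1)‖ := by
        rw [derivCoeff, norm_mul]; norm_cast
    _ ≤ ((n : ℝ) + 1) * (C * (2 * ((n : ℝ) + 1)) ^ k) := by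
        gcongr; exact h.trans (by gcongr; linarith)
    _ = C * 2 ^ k * ((n : ℝ) + 1) ^ (k + 1) := by rw [mul_pow]; ring

theorem summable_mul_pow_of_norm_le (ha : ∀ n, ‖a n‖ ≤ C * ((n : ℝ) + 1) ^ k) {z : 𝕜}
    (hz : ‖z‖ < 1) : Summable fun n => a n * z ^ n := by
  refine .of_norm_bounded
    ((summable_add_one_pow_mul_geometric k (r := ‖z‖) (by simpa using hz)).mul_left C) fun n => ?_
  rw [norm_mul, norm_pow, ← mul_assoc]
  gcongr
  exact ha n

theorem hasSum_ofScalarsSum (ha : ∀ n, ‖a n‖ ≤ C * ((n : ℝ) + 1) ^ k) {z : 𝕜} (hz : ‖z‖ < 1) :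
    HasSum (fun n => a n * z ^ n) (ofScalarsSum (E := 𝕜) a z) := by
  rw [ofScalars_sum_eq]
  simpa only [smul_eq_mul] using (summable_mul_pow_of_norm_le ha hz).hasSum

theorem hasDerivAt_ofScalarsSum (ha : ∀ n, ‖a n‖ ≤ C * ((n : ℝ) + 1) ^ k) {z : 𝕜}
    (hz : ‖z‖ < 1) :
    HasDerivAt (ofScalarsSum (E := 𝕜) a) (ofScalarsSum (E := 𝕜) (derivCoeff a) z) z := by
  obtain ⟨r, hzr, hr⟩ := exists_between hz
  have hr0 : 0 < r := (norm_nonneg z).trans_lt hzr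
  -- split off the constant term so that the termwise derivatives are `derivCoeff a n * y ^ n`
  have hshift : ofScalarsSum (E := 𝕜) a =ᶠ[𝓝 z]
      fun y => a 0 + ∑' n, a (n + 1) * y ^ (n + 1) := by
    filter_upwards [Metric.isOpen_ball.mem_nhds (mem_ball_zero_iff.mpr hz)] with y hy
    rw [(hasSum_ofScalarsSum ha (mem_ball_zero_iff.mp hy)).tsum_eq.symm,
      (hasSum_ofScalarsSum ha (mem_ball_zero_iff.mp hy)).summable.tsum_eq_zero_add]
    simp
  refine HasDerivAt.congr_of_eventuallyEq ?_ hshift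
  rw [ofScalars_sum_eq]
  simp only [smul_eq_mul]
  refine (hasDerivAt_tsum_of_isPreconnected
    (g := fun (n : ℕ) (y : 𝕜) => a (n + 1) * y ^ (n + 1))
    (g' := fun (n : ℕ) (y : 𝕜) => derivCoeff a n * y ^ n)
    (u := fun (n : ℕ) => C * 2 ^ k * (((n : ℝ) + 1) ^ (k + 1) * r ^ n))
    ((summable_add_one_pow_mul_geometric (k + 1) (by rwa [abs_of_pos hr0])).mul_left _)
    Metric.isOpen_ball (convex_ball 0 r).isPreconnected (fun n y _ => ?_) (fun n y hy => ?_)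
    (Metric.mem_ball_self hr0) (by simp) (mem_ball_zero_iff.mpr hzr)).const_add (a 0)
  · refine ((hasDerivAt_pow (n + 1) y).const_mul (a (n + 1))).congr_deriv ?_
    simp only [derivCoeff, Nat.cast_add, Nat.cast_one, add_tsub_cancel_right]; ring
  · rw [norm_mul, norm_pow, ← mul_assoc]
    have hy' : ‖y‖ ≤ r := (mem_ball_zero_iff.mp hy).le
    gcongr
    · exact (norm_nonneg _).trans (norm_derivCoeff_le ha n)
    · exact norm_derivCoeff_le ha n

theorem hypergeometric_ode_of_hasSum {a b c : 𝕜} {u : ℕ → 𝕜}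
    (hu : ∀ n : ℕ, (n + 1) * (c + n) * u (n + 1) = (a + n) * (b + n) * u n) {z w w' w'' : 𝕜}
    (h0 : HasSum (fun n => u n * z ^ n) w) (h1 : HasSum (fun n => derivCoeff u n * z ^ n) w')
    (h2 : HasSum (fun n => derivCoeff (derivCoeff u) n * z ^ n) w'') :
    z * (1 - z) * w'' + (c - (a + b + 1) * z) * w' - a * b * w = 0 := by
  have hzw'' : HasSum (fun n : ℕ => n * (n + 1) * u (n + 1) * z ^ n) (z * w'') :=
    .of_nat_add 1 ((h2.mul_left z).congr_fun fun n => by push_cast [derivCoeff]; ring) (by simp)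
  have hzzw'' : HasSum (fun n : ℕ => n * (n - 1) * u n * z ^ n) (z ^ 2 * w'') :=
    .of_nat_add 2 ((h2.mul_left (z ^ 2)).congr_fun fun n => by push_cast [derivCoeff]; ring)
      (by intro i hi; interval_cases i <;> simp)
  have hzw' : HasSum (fun n : ℕ => n * u n * z ^ n) (z * w') :=
    .of_nat_add 1 ((h1.mul_left z).congr_fun fun n => by push_cast [derivCoeff]; ring) (by simp)
  have hsum := (hzw''.sub hzzw'').add ((h1.mul_left c).sub ((hzw'.mul_left (a + b + 1)).add
    (h0.mul_left (a * b))))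
  linear_combination hsum.unique (hasSum_zero.congr_fun fun n => by
    rw [derivCoeff]; linear_combination z ^ n * hu n)

end PowerSeries

theorem ordinaryHypergeometricCoefficient_succ_mul {K : Type*} [Field K] [CharZero K] {a b c : K}
    {n : ℕ} (hc : (ascPochhammer K (n + 1)).eval c ≠ 0) :
    (n + 1) * (c + n) * ordinaryHypergeometricCoefficient a b c (n + 1) =
      (a + n) * (b + n) * ordinaryHypergeometricCoefficient a b c n := by
  rw [ascPochhammer_succ_eval] at hc
  simp only [ordinaryHypergeometricCoefficient, ascPochhammer_succ_eval, Nat.factorial_succ,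
    Nat.cast_mul, Nat.cast_succ]
  field_simp [left_ne_zero_of_mul hc, right_ne_zero_of_mul hc]

section Hypergeometric

variable {a b c : ℝ} (ha : |a| ≤ 1) (hb : |b| ≤ 1) (hc : 1 ≤ c)
include ha hb hc

theorem abs_ordinaryHypergeometricCoefficient_le_one (n : ℕ) :
    |ordinaryHypergeometricCoefficient a b c n| ≤ 1 := by
  induction n with
  | zero => simp
  | succ n ih =>
    have hn : (0 : ℝ) ≤ n := n.cast_nonneg
    have hpos : (0 : ℝ) < (n + 1) * (c + n) := by positivity
    rw [eq_div_of_mul_eq hpos.ne' ((mul_comm _ _).trans (ordinaryHypergeometricCoefficient_succ_mul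
      (ascPochhammer_pos _ _ (by linarith)).ne')), abs_div, abs_of_pos hpos, div_le_one hpos,
      abs_mul, abs_mul]
    calc |a + n| * |b + n| * |ordinaryHypergeometricCoefficient a b c n|
        ≤ (n + 1) * (n + 1) * 1 := by
          gcongr
          · exact (abs_add_le _ _).trans (by rw [abs_of_nonneg hn]; linarith)
          · exact (abs_add_le _ _).trans (by rw [abs_of_nonneg hn]; linarith)
      _ ≤ (n + 1) * (c + n) := by rw [mul_one]; gcongr ?_ * ?_; linarith

theorem norm_ordinaryHypergeometricCoefficient_le (n : ℕ) :
    ‖ordinaryHypergeometricCoefficient a b c n‖ ≤ 1 * ((n : ℝ) + 1) ^ 0 := by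
  simpa using abs_ordinaryHypergeometricCoefficient_le_one ha hb hc n

variable {z : ℝ} (hz : |z| < 1)
include hz

theorem hasDerivAt_ordinaryHypergeometric :
    HasDerivAt (₂F₁ a b c)
      (ofScalarsSum (E := ℝ) (derivCoeff (ordinaryHypergeometricCoefficient a b c)) z) z :=
  hasDerivAt_ofScalarsSum (norm_ordinaryHypergeometricCoefficient_le ha hb hc) hz

theorem hasDerivAt_ofScalarsSum_derivCoeff_ordinaryHypergeometricCoefficient :
    HasDerivAt (ofScalarsSum (E := ℝ) (derivCoeff (ordinaryHypergeometricCoefficient a b c)))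
      (ofScalarsSum (E := ℝ) (derivCoeff (derivCoeff (ordinaryHypergeometricCoefficient a b c))) z)
      z :=
  hasDerivAt_ofScalarsSum (norm_derivCoeff_le (norm_ordinaryHypergeometricCoefficient_le ha hb hc))
    hz

theorem ordinaryHypergeometric_ode :
    z * (1 - z) *
        ofScalarsSum (E := ℝ) (derivCoeff (derivCoeff (ordinaryHypergeometricCoefficient a b c))) z
      + (c - (a + b + 1) * z) *
        ofScalarsSum (E := ℝ) (derivCoeff (ordinaryHypergeometricCoefficient a b c)) z
      - a * b * ₂F₁ a b c z = 0 := by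
  have hbound := norm_ordinaryHypergeometricCoefficient_le ha hb hc
  exact hypergeometric_ode_of_hasSum
    (fun n => ordinaryHypergeometricCoefficient_succ_mul (ascPochhammer_pos _ _ (by linarith)).ne')
    (hasSum_ofScalarsSum hbound hz) (hasSum_ofScalarsSum (norm_derivCoeff_le hbound) hz)
    (hasSum_ofScalarsSum (norm_derivCoeff_le (norm_derivCoeff_le hbound)) hz)

end Hypergeometric

section MulComp

variable {𝕜 : Type*} [NontriviallyNormedField 𝕜] {s : Set 𝕜}
  {g g' g'' φ φ' φ'' F F' F'' : 𝕜 → 𝕜}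
  (hg : ∀ x ∈ s, HasDerivAt g (g' x) x) (hφ : ∀ x ∈ s, HasDerivAt φ (φ' x) x)
  (hF : ∀ x ∈ s, HasDerivAt F (F' (φ x)) (φ x))

include hg hφ hF in
theorem deriv_mul_comp_eq {x : 𝕜} (hx : x ∈ s) :
    deriv (fun y => g y * F (φ y)) x = g' x * F (φ x) + g x * (F' (φ x) * φ' x) :=
  ((hg x hx).mul ((hF x hx).comp x (hφ x hx))).deriv

include hg hφ hF in
theorem deriv_deriv_mul_comp_eq (hs : IsOpen s) (hg' : ∀ x ∈ s, HasDerivAt g' (g'' x) x)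
    (hφ' : ∀ x ∈ s, HasDerivAt φ' (φ'' x) x) (hF' : ∀ x ∈ s, HasDerivAt F' (F'' (φ x)) (φ x))
    {x : 𝕜} (hx : x ∈ s) :
    deriv (deriv fun y => g y * F (φ y)) x =
      g'' x * F (φ x) + 2 * g' x * F' (φ x) * φ' x + g x * F'' (φ x) * φ' x ^ 2
        + g x * F' (φ x) * φ'' x := by
  have hderiv : deriv (fun y => g y * F (φ y)) =ᶠ[𝓝 x]
      fun y => g' y * F (φ y) + g y * (F' (φ y) * φ' y) := by
    filter_upwards [hs.mem_nhds hx] with y hy using deriv_mul_comp_eq hg hφ hF hy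
  rw [hderiv.deriv_eq]
  refine (((hg' x hx).mul ((hF x hx).comp x (hφ x hx))).add
    ((hg x hx).mul (((hF' x hx).comp x (hφ x hx)).mul (hφ' x hx)))).deriv.trans ?_
  simp only [Function.comp_apply, Pi.mul_apply]
  ring

end MulComp

namespace H

noncomputable def arg (x : ℝ) : ℝ := 27 * x * (2 - 3 * x) / (1 - 4 * x) ^ 3
noncomputable def arg' (x : ℝ) : ℝ := (54 + 270 * x - 324 * x ^ 2) / (1 - 4 * x) ^ 4
noncomputable def arg'' (x : ℝ) : ℝ := (1134 + 2592 * x - 2592 * x ^ 2) / (1 - 4 * x) ^ 5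
noncomputable def prefactor (x : ℝ) : ℝ := 6 / ((1 - 4 * x) * (1 - 64 * x))
noncomputable def prefactor' (x : ℝ) : ℝ := (408 - 3072 * x) / ((1 - 4 * x) * (1 - 64 * x)) ^ 2
noncomputable def prefactor'' (x : ℝ) : ℝ :=
  (52416 - 626688 * x + 2359296 * x ^ 2) / ((1 - 4 * x) * (1 - 64 * x)) ^ 3

variable {x : ℝ}

theorem hasDerivAt_arg (h4 : 1 - 4 * x ≠ 0) : HasDerivAt arg (arg' x) x := by
  have h := (((hasDerivAt_id x).const_mul 27).mul
    ((hasDerivAt_id x).const_mul 3 |>.const_sub 2)).div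
    (((hasDerivAt_id x).const_mul 4 |>.const_sub 1).pow 3) (pow_ne_zero 3 h4)
  refine h.congr_deriv ?_
  norm_num [arg']
  field_simp
  ring

theorem hasDerivAt_arg' (h4 : 1 - 4 * x ≠ 0) : HasDerivAt arg' (arg'' x) x := by
  have h := (((hasDerivAt_id x).const_mul 270 |>.const_add 54).sub
    ((hasDerivAt_pow 2 x).const_mul 324)).div
    (((hasDerivAt_id x).const_mul 4 |>.const_sub 1).pow 4) (pow_ne_zero 4 h4)
  refine h.congr_deriv ?_
  norm_num [arg'']
  field_simp
  ring

theorem hasDerivAt_prefactor (h4 : 1 - 4 * x ≠ 0) (h64 : 1 - 64 * x ≠ 0) :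
    HasDerivAt prefactor (prefactor' x) x := by
  have h := (hasDerivAt_const x (6 : ℝ)).div
    (((hasDerivAt_id x).const_mul 4 |>.const_sub 1).mul
      ((hasDerivAt_id x).const_mul 64 |>.const_sub 1)) (mul_ne_zero h4 h64)
  refine h.congr_deriv ?_
  norm_num [prefactor']
  field_simp
  ring

theorem hasDerivAt_prefactor' (h4 : 1 - 4 * x ≠ 0) (h64 : 1 - 64 * x ≠ 0) :
    HasDerivAt prefactor' (prefactor'' x) x := by
  have h := ((hasDerivAt_const x (408 : ℝ)).sub ((hasDerivAt_id x).const_mul 3072)).div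
    ((((hasDerivAt_id x).const_mul 4 |>.const_sub 1).mul
      ((hasDerivAt_id x).const_mul 64 |>.const_sub 1)).pow 2) (pow_ne_zero 2 (mul_ne_zero h4 h64))
  refine h.congr_deriv ?_
  norm_num [prefactor'']
  field_simp
  ring

theorem abs_arg_lt_one (hx : |x| < 1 / 100) : |arg x| < 1 := by
  obtain ⟨hx₁, hx₂⟩ := abs_lt.mp hx
  have hd : 0 < (1 - 4 * x) ^ 3 := pow_pos (by linarith) 3
  rw [arg, abs_div, abs_of_pos hd, div_lt_one hd, abs_lt]
  constructor <;> nlinarith [sq_nonneg x, sq_nonneg (1 - 4 * x)]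

theorem eq_prefactor_mul_comp_arg :
    H = fun x => prefactor x * ₂F₁ (1 / 3 : ℝ) (2 / 3) 2 (arg x) := by
  funext x
  rw [ordinaryHypergeometric_eq_tsum]
  simp only [H, prefactor, arg, F13232, smul_eq_mul]
  congr 1
  exact tsum_congr fun n => by ring

-- The multiplier is forced by the `w''` terms: it is
-- `x(x-1)(64x-1)(3x-2)(6x+1) · prefactor x · (arg' x)² / (arg x · (1 - arg x))`.
theorem P2_apply_eq_mul_hypergeometric (h4 : 1 - 4 * x ≠ 0) (h64 : 1 - 64 * x ≠ 0)
    (w w' w'' : ℝ) :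
    x*(x - 1)*(64*x - 1)*(3*x - 2)*(6*x + 1) *
        (prefactor'' x * w + 2 * prefactor' x * w' * arg' x + prefactor x * w'' * arg' x ^ 2
          + prefactor x * w' * arg'' x)
      + (4608*x^4 - 6372*x^3 + 813*x^2 + 514*x - 4) *
        (prefactor' x * w + prefactor x * (w' * arg' x))
      + 4*(576*x^3 - 801*x^2 - 108*x + 74) * (prefactor x * w) =
    -648 * (1 - x) * (1 + 6 * x) ^ 3 / ((1 - 4 * x) ^ 3 * (1 - 64 * x)) *
      (arg x * (1 - arg x) * w'' + (2 - (1 / 3 + 2 / 3 + 1) * arg x) * w'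
        - 1 / 3 * (2 / 3) * w) := by
  -- `field_simp` needs the denominators in its own normal form
  have h4' : 1 - x * 4 ≠ 0 := by rwa [mul_comm]
  have h64' : 1 - x * 64 ≠ 0 := by rwa [mul_comm]
  simp only [arg, arg', arg'', prefactor, prefactor', prefactor'']
  field_simp
  ring

end H

/-- The second-order operator `P₂` annihilates `H` on a neighbourhood of `0`. -/
theorem P2_annihilates_H :
    ∃ ε > (0 : ℝ), ∀ x : ℝ, |x| < ε →
      x*(x - 1)*(64*x - 1)*(3*x - 2)*(6*x + 1) * deriv (deriv H) x
        + (4608*x^4 - 6372*x^3 + 813*x^2 + 514*x - 4) * deriv H x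
        + 4*(576*x^3 - 801*x^2 - 108*x + 74) * H x = 0 := by
  have ha : |(1 / 3 : ℝ)| ≤ 1 := by norm_num [abs_of_pos]
  have hb : |(2 / 3 : ℝ)| ≤ 1 := by norm_num [abs_of_pos]
  have hc : (1 : ℝ) ≤ 2 := by norm_num
  have hball : ∀ x ∈ Metric.ball (0 : ℝ) (1 / 100),
      1 - 4 * x ≠ 0 ∧ 1 - 64 * x ≠ 0 ∧ |H.arg x| < 1 := by
    intro x hx
    rw [mem_ball_zero_iff, Real.norm_eq_abs] at hx
    obtain ⟨hx₁, hx₂⟩ := abs_lt.mp hx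
    exact ⟨by linarith, by linarith, H.abs_arg_lt_one hx⟩
  have hpre := fun x hx => H.hasDerivAt_prefactor (hball x hx).1 (hball x hx).2.1
  have hpre' := fun x hx => H.hasDerivAt_prefactor' (hball x hx).1 (hball x hx).2.1
  have harg := fun x hx => H.hasDerivAt_arg (hball x hx).1
  have harg' := fun x hx => H.hasDerivAt_arg' (hball x hx).1
  have hF := fun x hx => hasDerivAt_ordinaryHypergeometric ha hb hc (hball x hx).2.2
  have hF' := fun x hx =>
    hasDerivAt_ofScalarsSum_derivCoeff_ordinaryHypergeometricCoefficient ha hb hc (hball x hx).2.2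
  refine ⟨1 / 100, by norm_num, fun x hxε => ?_⟩
  have hx : x ∈ Metric.ball (0 : ℝ) (1 / 100) := by rwa [mem_ball_zero_iff, Real.norm_eq_abs]
  obtain ⟨h4, h64, harg1⟩ := hball x hx
  rw [H.eq_prefactor_mul_comp_arg,
    deriv_deriv_mul_comp_eq hpre harg hF Metric.isOpen_ball hpre' harg' hF' hx,
    deriv_mul_comp_eq hpre harg hF hx, H.P2_apply_eq_mul_hypergeometric h4 h64,
    ordinaryHypergeometric_ode ha hb hc harg1, mul_zero]
end

section
/- Let F(s,t,u) ∈ ℚ[[s,t,u]] have coefficients c_{i,j,k} and suppose a linear differential operator P(x, d/dx) with polynomial coefficients and rational functions S, T ∈ ℚ(x,s,t) satisfy P(G) = ∂S/∂s + ∂T/∂t, where G(s,t,x) = (1/(st))·F(s, t/s, x/t) viewed in the module of formal sums Σ c_{α,β,γ} s^α t^β x^γ over α ∈ ℕ, β,γ ∈ ℤ with α+β ≥ −μ, β+γ ≥ −ν. Then P annihilates the diagonal Diag(F)(x) = Σ_{n≥0} c_{n,n,n} x^n. -/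
/-!  Lipshitz's lemma.  We model formal sums `Σ c_{α,β,γ} s^α t^β x^γ`
(`α, β, γ ∈ ℤ`) by their coefficient functions `ℤ × ℤ × ℤ → ℚ`. -/

/-- The support condition defining Lipshitz's module of formal sums:
there are `μ, ν ∈ ℕ` with `α + β ≥ −μ` and `β + γ ≥ −ν` on the support. -/
def InLipshitzModule (c : ℤ × ℤ × ℤ → ℚ) : Prop :=
  ∃ μ ν : ℕ, ∀ α β γ : ℤ, c (α, β, γ) ≠ 0 → -(μ : ℤ) ≤ α + β ∧ -(ν : ℤ) ≤ β + γ

/-- Partial derivative `∂/∂s` on coefficient functions. -/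
def pdS (c : ℤ × ℤ × ℤ → ℚ) : ℤ × ℤ × ℤ → ℚ :=
  fun z => ((z.1 + 1 : ℤ) : ℚ) * c (z.1 + 1, z.2.1, z.2.2)

/-- Partial derivative `∂/∂t` on coefficient functions. -/
def pdT (c : ℤ × ℤ × ℤ → ℚ) : ℤ × ℤ × ℤ → ℚ :=
  fun z => ((z.2.1 + 1 : ℤ) : ℚ) * c (z.1, z.2.1 + 1, z.2.2)

/-- Partial derivative `∂/∂x` on coefficient functions. -/
def pdX (c : ℤ × ℤ × ℤ → ℚ) : ℤ × ℤ × ℤ → ℚ :=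
  fun z => ((z.2.2 + 1 : ℤ) : ℚ) * c (z.1, z.2.1, z.2.2 + 1)

/-- Multiplication by a polynomial in `x` on coefficient functions. -/
noncomputable def polyMulX (q : Polynomial ℚ) (c : ℤ × ℤ × ℤ → ℚ) : ℤ × ℤ × ℤ → ℚ :=
  fun z => ∑ k ∈ Finset.range (q.natDegree + 1), q.coeff k * c (z.1, z.2.1, z.2.2 - (k : ℤ))

/-- The action of the operator `P = Σ_{i≤r} p_i(x) ∂ₓ^i` on coefficient functions. -/
noncomputable def applyOp (r : ℕ) (p : ℕ → Polynomial ℚ) (c : ℤ × ℤ × ℤ → ℚ) :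
    ℤ × ℤ × ℤ → ℚ :=
  fun z => ∑ i ∈ Finset.range (r + 1), polyMulX (p i) (pdX^[i] c) z

/-- The coefficient function of `G = (1/(st))·F(s, t/s, x/t)`, where `c i j k` are
the coefficients of `F`: the coefficient of `s^α t^β x^γ` is `c_{i,j,k}` with
`k = γ`, `j = β + γ + 1`, `i = α + β + γ + 2`. -/
def Gof (c : ℕ → ℕ → ℕ → ℚ) : ℤ × ℤ × ℤ → ℚ := fun z =>
  if 0 ≤ z.2.2 ∧ 0 ≤ z.2.1 + z.2.2 + 1 ∧ 0 ≤ z.1 + z.2.1 + z.2.2 + 2 then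
    c (z.1 + z.2.1 + z.2.2 + 2).toNat (z.2.1 + z.2.2 + 1).toNat z.2.2.toNat
  else 0

/-!
Evaluate the hypothesis at the monomials `s⁻¹ t⁻¹ xⁿ`. A derivative `∂/∂s` never produces the
exponent `-1` in `s` (the factor `α + 1` vanishes there), and likewise for `∂/∂t`, so the right-hand
side contributes nothing. On the left, `P` acts on the `x`-coefficients of each `sᵅ tᵝ` separately,
and the coefficients of `s⁻¹ t⁻¹` in `G` are exactly those of `Diag(F)`.
-/

open scoped Polynomial
open PowerSeries

section CoeffSeq

variable {R : Type*}

/-- The coefficients of a power series, extended by zero to negative exponents. -/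
noncomputable def intCoeff [CommSemiring R] : R⟦X⟧ →ₗ[R] ℤ → R :=
  LinearMap.pi fun γ => if 0 ≤ γ then coeff γ.toNat else 0

theorem intCoeff_natCast [CommSemiring R] (f : R⟦X⟧) (n : ℕ) : intCoeff f n = coeff n f := by
  simp [intCoeff]

theorem intCoeff_of_neg [CommSemiring R] (f : R⟦X⟧) {γ : ℤ} (hγ : γ < 0) : intCoeff f γ = 0 := by
  simp [intCoeff, hγ.not_ge]

theorem intCoeff_X_pow_mul [CommSemiring R] (f : R⟦X⟧) (k : ℕ) (γ : ℤ) :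
    intCoeff (X ^ k * f) γ = intCoeff f (γ - k) := by
  rcases lt_or_ge γ 0 with hγ | hγ
  · rw [intCoeff_of_neg _ hγ, intCoeff_of_neg _ (by omega)]
  lift γ to ℕ using hγ
  rw [intCoeff_natCast, coeff_X_pow_mul']
  split_ifs with hk
  · rw [← Nat.cast_sub hk, intCoeff_natCast]
  · rw [intCoeff_of_neg _ (by omega)]

theorem polynomial_coe_eq_sum_range [CommSemiring R] (q : R[X]) :
    (q : R⟦X⟧) = ∑ k ∈ Finset.range (q.natDegree + 1), C (q.coeff k) * X ^ k := by
  rw [← Polynomial.eval₂_C_X_eq_coe, Polynomial.eval₂_eq_sum_range]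

noncomputable def coeffPolyMul [Semiring R] (q : R[X]) (g : ℤ → R) : ℤ → R :=
  fun γ => ∑ k ∈ Finset.range (q.natDegree + 1), q.coeff k * g (γ - k)

theorem intCoeff_coe_mul [CommSemiring R] (q : R[X]) (f : R⟦X⟧) :
    intCoeff ((q : R⟦X⟧) * f) = coeffPolyMul q (intCoeff f) := by
  funext γ
  simp only [polynomial_coe_eq_sum_range, Finset.sum_mul, ← smul_eq_C_mul, smul_mul_assoc,
    map_sum, map_smul, Finset.sum_apply, Pi.smul_apply, intCoeff_X_pow_mul, smul_eq_mul,
    coeffPolyMul]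

def coeffDeriv [Ring R] (g : ℤ → R) : ℤ → R :=
  fun γ => ((γ + 1 : ℤ) : R) * g (γ + 1)

theorem intCoeff_derivative [CommRing R] (f : R⟦X⟧) :
    intCoeff (d⁄dX R f) = coeffDeriv (intCoeff f) := by
  funext γ
  rcases lt_trichotomy γ (-1) with hγ | rfl | hγ
  · rw [coeffDeriv, intCoeff_of_neg _ (by omega), intCoeff_of_neg _ (by omega), mul_zero]
  · simp [coeffDeriv, intCoeff_of_neg]
  · lift γ to ℕ using (by omega)
    have hcast : (γ : ℤ) + 1 = ((γ + 1 : ℕ) : ℤ) := by push_cast; rfl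
    rw [coeffDeriv, intCoeff_natCast, coeff_derivative, hcast, intCoeff_natCast, mul_comm]
    push_cast
    rfl

theorem intCoeff_iterate_derivative [CommRing R] (f : R⟦X⟧) (i : ℕ) :
    intCoeff ((d⁄dX R)^[i] f) = coeffDeriv^[i] (intCoeff f) := by
  induction i with
  | zero => rfl
  | succ i ih =>
    rw [Function.iterate_succ_apply', Function.iterate_succ_apply', intCoeff_derivative, ih]

end CoeffSeq

/-- The coefficients of `sᵅ tᵝ` in a formal sum, as a Laurent series in `x`. -/
def xSlice (C : ℤ × ℤ × ℤ → ℚ) (α β : ℤ) : ℤ → ℚ :=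
  fun γ => C (α, β, γ)

theorem xSlice_iterate_pdX (C : ℤ × ℤ × ℤ → ℚ) (i : ℕ) (α β : ℤ) :
    xSlice (pdX^[i] C) α β = coeffDeriv^[i] (xSlice C α β) := by
  induction i with
  | zero => rfl
  | succ i ih =>
    rw [Function.iterate_succ_apply', Function.iterate_succ_apply', ← ih]
    rfl

theorem xSlice_applyOp (r : ℕ) (p : ℕ → ℚ[X]) (C : ℤ × ℤ × ℤ → ℚ) (α β : ℤ) :
    xSlice (applyOp r p C) α β =
      ∑ i ∈ Finset.range (r + 1), coeffPolyMul (p i) (coeffDeriv^[i] (xSlice C α β)) := by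
  funext γ
  simp only [Finset.sum_apply, ← xSlice_iterate_pdX]
  rfl

theorem pdS_apply_neg_one (S : ℤ × ℤ × ℤ → ℚ) (β γ : ℤ) : pdS S (-1, β, γ) = 0 := by
  simp [pdS]

theorem pdT_apply_neg_one (T : ℤ × ℤ × ℤ → ℚ) (α γ : ℤ) : pdT T (α, -1, γ) = 0 := by
  simp [pdT]

theorem intCoeff_diagonal (c : ℕ → ℕ → ℕ → ℚ) :
    intCoeff (mk fun n => c n n n) = xSlice (Gof c) (-1) (-1) := by
  funext γ
  rcases lt_or_ge γ 0 with hγ | hγ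
  · simp [intCoeff_of_neg _ hγ, xSlice, Gof, hγ.not_ge]
  · lift γ to ℕ using hγ
    simp [intCoeff_natCast, xSlice, Gof]

theorem lipshitz_lemma_general (c : ℕ → ℕ → ℕ → ℚ) (r : ℕ) (p : ℕ → Polynomial ℚ)
    (S T : ℤ × ℤ × ℤ → ℚ)
    (heq : applyOp r p (Gof c) = fun z => pdS S z + pdT T z) :
    ∑ i ∈ Finset.range (r + 1),
        (p i : PowerSeries ℚ) *
          (PowerSeries.derivativeFun^[i] (PowerSeries.mk fun n => c n n n)) = 0 := by
  have hresidue : xSlice (applyOp r p (Gof c)) (-1) (-1) = 0 := by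
    funext γ
    simp [xSlice, heq, pdS_apply_neg_one, pdT_apply_neg_one]
  have key : intCoeff (∑ i ∈ Finset.range (r + 1),
      (p i : ℚ⟦X⟧) * (d⁄dX ℚ)^[i] (mk fun n => c n n n)) = 0 := by
    simp only [map_sum, intCoeff_coe_mul, intCoeff_iterate_derivative, intCoeff_diagonal,
      ← xSlice_applyOp, hresidue]
  ext n
  rw [map_zero, ← intCoeff_natCast]
  exact congrFun key n

/-- **Lipshitz's lemma.**  If `P(G) = ∂S/∂s + ∂T/∂t` for some nonzero operator
`P(x, d/dx)` with polynomial coefficients and elements `S, T` of the module of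
formal sums (e.g. expansions of rational functions), then `P` annihilates the
diagonal `Diag(F) = Σ c_{n,n,n} xⁿ`. -/
theorem lipshitz_lemma (c : ℕ → ℕ → ℕ → ℚ) (r : ℕ) (p : ℕ → Polynomial ℚ)
    (S T : ℤ × ℤ × ℤ → ℚ)
    (hP : ∃ i ≤ r, p i ≠ 0)
    (hS : InLipshitzModule S) (hT : InLipshitzModule T)
    (heq : applyOp r p (Gof c) = fun z => pdS S z + pdT T z) :
    ∑ i ∈ Finset.range (r + 1),
        (p i : PowerSeries ℚ) *
          (PowerSeries.derivativeFun^[i] (PowerSeries.mk fun n => c n n n)) = 0 :=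
  lipshitz_lemma_general c r p S T heq
end

section
/- If a sequence (a_n) of rationals satisfies a linear recurrence with polynomial coefficients p₀(n)a_n + p₁(n)a_{n+1} + ... + p_r(n)a_{n+r} = 0 for all n ≥ 0, with p_r not identically zero, then the generating function Σ a_n xⁿ satisfies a linear differential equation with polynomial coefficients (it is D-finite). -/
/-!
Write `D` for `d/dx`. Since `xʲ Dʲ g` has coefficients `n(n-1)⋯(n-j+1) gₙ`, expanding
`pᵢ(n - i)` in falling factorials gives an operator `L = ∑ⱼ qⱼ(x) Dʲ` with
`[x^(m+r)] L g = ∑ᵢ pᵢ(m) [x^(m+i)] g` for every power series `g`. By the recurrence, `L f`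
has no coefficients beyond `x^(r-1)` for the generating function `f`, so it is a polynomial `P`;
and `L ≠ 0` because on `g = x^(m+r)` the right side is `p_r(m)`, nonzero for some `m`.
Finally `P · (L f)' - P' · L f = 0` is a homogeneous equation whose leading coefficient is `P`
times that of `L`.
-/

open Finset Polynomial

namespace Polynomial

variable {R : Type*} [CommRing R] [IsDomain R]

theorem exists_eq_sum_descPochhammer (N : ℕ) (P : R[X]) (hP : P.natDegree ≤ N) :
    ∃ c : ℕ → R, P = ∑ j ∈ range (N + 1), C (c j) * descPochhammer R j := by
  induction N generalizing P with
  | zero =>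
    refine ⟨fun _ => P.coeff 0, ?_⟩
    rw [sum_range_one, descPochhammer_zero, mul_one]
    exact eq_C_of_natDegree_le_zero hP
  | succ N ih =>
    have hmonic := monic_descPochhammer R (N + 1)
    have hdeg := descPochhammer_natDegree R (N + 1)
    set Q := P - C (P.coeff (N + 1)) * descPochhammer R (N + 1)
    have hQ : Q.natDegree ≤ N := by
      refine natDegree_le_iff_coeff_eq_zero.mpr fun m hm => ?_
      rcases (Nat.succ_le_of_lt hm).eq_or_lt with rfl | hlt
      · have hone : (descPochhammer R (N + 1)).coeff (N + 1) = 1 := by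
          simpa only [hdeg] using hmonic.coeff_natDegree
        simp [Q, hone]
      · simp [Q, coeff_eq_zero_of_natDegree_lt (hP.trans_lt hlt),
          coeff_eq_zero_of_natDegree_lt (hdeg.trans_lt hlt)]
    obtain ⟨c, hc⟩ := ih Q hQ
    refine ⟨Function.update c (N + 1) (P.coeff (N + 1)), ?_⟩
    rw [sum_range_succ, Function.update_self,
      sum_congr rfl fun j hj => by rw [Function.update_of_ne (by simp at hj; omega)], ← hc]
    ring

end Polynomial

namespace PowerSeries

variable {R : Type*}

section CommSemiring

variable [CommSemiring R]

theorem coeff_X_pow_mul_iterate_derivative (g : R⟦X⟧) (k n : ℕ) :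
    coeff n (X ^ k * (d⁄dX R)^[k] g) = n.descFactorial k * coeff n g := by
  rcases le_or_gt k n with hkn | hnk
  · obtain ⟨m, rfl⟩ := Nat.exists_eq_add_of_le' hkn
    rw [coeff_X_pow_mul, coeff_iterate_derivative, Nat.add_descFactorial_eq_ascFactorial]
  · simp [coeff_X_pow_mul', hnk, Nat.descFactorial_eq_zero_iff_lt.mpr hnk]

theorem eq_coe_trunc_of_coeff_add_eq_zero {f : R⟦X⟧} {r : ℕ}
    (h : ∀ m, coeff (m + r) f = 0) : f = trunc r f := by
  ext n
  rw [Polynomial.coeff_coe, coeff_trunc]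
  split_ifs with hn
  · rfl
  · simpa [Nat.sub_add_cancel (not_lt.mp hn)] using h (n - r)

noncomputable def applyDiffOp (d : ℕ) (q : ℕ → R[X]) (f : R⟦X⟧) : R⟦X⟧ :=
  ∑ i ∈ range (d + 1), (q i : R⟦X⟧) * (d⁄dX R)^[i] f

theorem exists_ne_zero_applyDiffOp_eq {d : ℕ} {q : ℕ → R[X]} (h : ∃ i ≤ d, q i ≠ 0)
    (f : R⟦X⟧) : ∃ e, q e ≠ 0 ∧ applyDiffOp e q f = applyDiffOp d q f := by
  classical
  obtain ⟨i, hid, hi⟩ := h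
  refine ⟨Nat.findGreatest (fun i => q i ≠ 0) d,
    Nat.findGreatest_spec (P := fun i => q i ≠ 0) hid hi, ?_⟩
  refine sum_subset (range_subset_range.mpr (Nat.succ_le_succ (Nat.findGreatest_le d)))
    fun k hk hke => ?_
  simp only [mem_range] at hk hke
  have hqk : q k = 0 := not_not.mp <|
    Nat.findGreatest_is_greatest (P := fun i => q i ≠ 0) (n := d) (by omega) (by omega)
  rw [hqk, Polynomial.coe_zero, zero_mul]

theorem derivative_applyDiffOp (d : ℕ) (q : ℕ → R[X]) (f : R⟦X⟧) :
    d⁄dX R (applyDiffOp d q f) =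
      applyDiffOp d (fun i => Polynomial.derivative (q i)) f + applyDiffOp d q (d⁄dX R f) := by
  simp only [applyDiffOp, map_sum, ← sum_add_distrib, Derivation.leibniz, derivative_coe,
    smul_eq_mul, ← Function.iterate_succ_apply' (d⁄dX R), Function.iterate_succ_apply]
  exact sum_congr rfl fun i _ => by rw [add_comm, mul_comm]

theorem exists_applyDiffOp_succ_eq_add (d : ℕ) (u v : ℕ → R[X]) (f : R⟦X⟧) :
    ∃ w : ℕ → R[X], w (d + 1) = v d ∧
      applyDiffOp (d + 1) w f = applyDiffOp d u f + applyDiffOp d v (d⁄dX R f) := by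
  refine ⟨fun k => (if k ≤ d then u k else 0) + if k = 0 then 0 else v (k - 1), by simp, ?_⟩
  simp only [applyDiffOp, Polynomial.coe_add, add_mul, sum_add_distrib]
  congr 1
  · rw [sum_range_succ, if_neg (by omega), Polynomial.coe_zero, zero_mul, add_zero]
    exact sum_congr rfl fun k hk => by rw [if_pos (by simpa [Nat.lt_succ_iff] using hk)]
  · rw [sum_range_succ', if_pos rfl, Polynomial.coe_zero, zero_mul, add_zero]
    exact sum_congr rfl fun k _ => by simp [Function.iterate_succ_apply]

end CommSemiring

section CommRing

variable [CommRing R] [IsDomain R]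

theorem exists_coeff_applyDiffOp_eq_eval_mul (P : R[X]) {N : ℕ} (hP : P.natDegree ≤ N) :
    ∃ c : ℕ → R, ∀ g n,
      coeff n (applyDiffOp N (fun j => Polynomial.C (c j) * Polynomial.X ^ j) g) =
        P.eval (n : R) * coeff n g := by
  obtain ⟨c, rfl⟩ := Polynomial.exists_eq_sum_descPochhammer N P hP
  refine ⟨c, fun g n => ?_⟩
  simp only [applyDiffOp, map_sum, Polynomial.coe_mul, Polynomial.coe_C, Polynomial.coe_pow,
    Polynomial.coe_X, mul_assoc, coeff_C_mul, coeff_X_pow_mul_iterate_derivative, eval_finsetSum,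
    eval_mul, eval_C, descPochhammer_eval_eq_descFactorial, sum_mul]

theorem exists_coeff_add_applyDiffOp_eq_sum (r : ℕ) (p : ℕ → R[X]) :
    ∃ N q, ∀ (g : R⟦X⟧) m, coeff (m + r) (applyDiffOp N q g) =
      ∑ i ∈ range (r + 1), (p i).eval (m : R) * coeff (m + i) g := by
  set N := univ.sup fun i : Fin (r + 1) => (p i).natDegree
  have hdeg : ∀ i : Fin (r + 1),
      ((p i).comp (Polynomial.X - Polynomial.C (i : R))).natDegree ≤ N := fun i =>
    natDegree_comp_le.trans <| by
      rw [natDegree_X_sub_C, mul_one]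
      exact le_sup (f := fun i : Fin (r + 1) => (p i).natDegree) (mem_univ i)
  choose c hc using fun i => exists_coeff_applyDiffOp_eq_eval_mul _ (hdeg i)
  set L : Fin (r + 1) → ℕ → R[X] := fun i j => Polynomial.C (c i j) * Polynomial.X ^ j
  refine ⟨N, fun j => ∑ i : Fin (r + 1), Polynomial.X ^ (r - i) * L i j, fun g m => ?_⟩
  have hsplit : applyDiffOp N (fun j => ∑ i : Fin (r + 1), Polynomial.X ^ (r - i) * L i j) g =
      ∑ i : Fin (r + 1), X ^ (r - i) * applyDiffOp N (L i) g := by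
    simp only [applyDiffOp, ← coeToPowerSeries.ringHom_apply, map_sum, map_mul, map_pow]
    simp only [coeToPowerSeries.ringHom_apply, Polynomial.coe_X, sum_mul, mul_sum, mul_assoc]
    exact sum_comm
  rw [hsplit, map_sum, ← Fin.sum_univ_eq_sum_range]
  refine sum_congr rfl fun i _ => ?_
  have hi : m + r = m + i + (r - i) := by omega
  rw [hi, coeff_X_pow_mul, hc]
  simp

theorem exists_ne_zero_of_coeff_add_applyDiffOp_eq_sum [CharZero R] {r N : ℕ} {p q : ℕ → R[X]}
    (hp : p r ≠ 0) (h : ∀ (g : R⟦X⟧) m, coeff (m + r) (applyDiffOp N q g) =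
      ∑ i ∈ range (r + 1), (p i).eval (m : R) * coeff (m + i) g) :
    ∃ j ≤ N, q j ≠ 0 := by
  obtain ⟨m, hm⟩ : ∃ m : ℕ, (p r).eval (m : R) ≠ 0 := by
    by_contra! hroot
    exact hp <| eq_zero_of_infinite_isRoot _ <|
      (Set.infinite_range_of_injective Nat.cast_injective).mono (Set.range_subset_iff.mpr hroot)
  by_contra! hq
  have hzero : applyDiffOp N q (X ^ (m + r)) = 0 := sum_eq_zero fun j hj => by
    rw [hq j (Nat.lt_succ_iff.mp (mem_range.mp hj)), Polynomial.coe_zero, zero_mul]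
  have hmono := h (X ^ (m + r)) m
  rw [hzero, map_zero, sum_eq_single r (fun i _ hir => by simp [coeff_X_pow, hir]) (by simp)]
    at hmono
  exact hm (by simpa [coeff_X_pow] using hmono.symm)

theorem exists_applyDiffOp_eq_zero_of_eq_coe {d : ℕ} {q : ℕ → R[X]} {f : R⟦X⟧} {P : R[X]}
    (hq : q d ≠ 0) (h : applyDiffOp d q f = P) :
    ∃ e w, w e ≠ 0 ∧ applyDiffOp e w f = 0 := by
  by_cases hP : P = 0
  · exact ⟨d, q, hq, by rw [h, hP, Polynomial.coe_zero]⟩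
  obtain ⟨w, hw_top, hw⟩ := exists_applyDiffOp_succ_eq_add d
    (fun i => P * Polynomial.derivative (q i) - Polynomial.derivative P * q i) (fun i => P * q i) f
  refine ⟨d + 1, w, hw_top ▸ mul_ne_zero hP hq, ?_⟩
  calc applyDiffOp (d + 1) w f
      = P * d⁄dX R (applyDiffOp d q f) -
          (Polynomial.derivative P : R⟦X⟧) * applyDiffOp d q f := by
        rw [hw, derivative_applyDiffOp]
        simp only [applyDiffOp, Polynomial.coe_sub, Polynomial.coe_mul, mul_add, mul_sum, sub_mul,
          sum_sub_distrib, mul_assoc]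
        ring
    _ = 0 := by rw [h, derivative_coe, mul_comm, sub_self]

end CommRing

end PowerSeries

open PowerSeries in
/-- If a sequence of rationals is P-recursive (it satisfies a linear recurrence
with polynomial coefficients, with nonzero leading coefficient polynomial),
then its generating function is D-finite: it satisfies a linear differential
equation with polynomial coefficients, not all zero. -/
theorem generating_function_D_finite (a : ℕ → ℚ) (r : ℕ) (p : ℕ → Polynomial ℚ)
    (hp : p r ≠ 0)
    (hrec : ∀ n : ℕ, ∑ i ∈ range (r + 1), (p i).eval (n : ℚ) * a (n + i) = 0) :
    ∃ (d : ℕ) (q : ℕ → Polynomial ℚ), (∃ i ≤ d, q i ≠ 0) ∧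
      ∑ i ∈ range (d + 1),
          (q i : PowerSeries ℚ) *
            (PowerSeries.derivativeFun^[i] (PowerSeries.mk a)) = 0 := by
  obtain ⟨N, q, hcoeff⟩ := exists_coeff_add_applyDiffOp_eq_sum r p
  obtain ⟨e, hqe, he⟩ :=
    exists_ne_zero_applyDiffOp_eq (exists_ne_zero_of_coeff_add_applyDiffOp_eq_sum hp hcoeff) (mk a)
  have hpoly : applyDiffOp N q (mk a) = trunc r (applyDiffOp N q (mk a)) :=
    eq_coe_trunc_of_coeff_add_eq_zero fun m => by simp [hcoeff, hrec m]
  obtain ⟨d, w, hw, hwf⟩ := exists_applyDiffOp_eq_zero_of_eq_coe hqe (he.trans hpoly)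
  exact ⟨d, w, ⟨d, le_rfl, hw⟩, hwf⟩
end
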